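/- Let λ, μ, α > 0. For any integers 0 ≤ x < y, any real z, and any t ≥ 0, P( ξ_y(t) > z ) ≤ P( ξ_x(t) > z − |x − y| ). -/

import Mathlib

/-!
Since `ξ(t) = η(ν(t))` with `ν` an independent Poisson process, `P(ξ_x(t) ≥ c)` is the Poisson
mixture over `n` of the tails of the `n`-step law of the embedded chain `η` started at `x`, and
`ξ_y(t) > z` versus `ξ_x(t) > z - (y - x)` becomes, after rounding `z`, a comparison of integer
tails with thresholds `c` and `c - (y - x)`. It therefore suffices that the chain started at
`x + 1` is stochastically dominated by one plus the chain started at `x`, at every step; the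
shift by `y - x` follows by iterating in the starting point.

This domination propagates through one step by Abel summation against the one-step tails
`T_a(i) = P_i(η_1 ≥ a)`: for `a ≥ 2` they are nondecreasing in `i` (the uniform catastrophe
from a higher state lands above `a` more often), and `T_{a+1}(i+1) ≤ T_a(i)`. For `a ≤ 1` the
shifted tail is `1` and there is nothing to prove, which is why the failure of monotonicity at
`a = 1` (the reflection `0 → 1`) does no harm.
-/

open MeasureTheory ProbabilityTheory Filter Set
open scoped ENNReal Topology

noncomputable section

/-- Transition probabilities of the embedded Markov chain of the Poisson process with
uniform catastrophes: from `i ≥ 1`, go to `i+1` with probability `λ/(λ+μ)` and to each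
`j < i` with probability `μ/(i(λ+μ))`; from `0`, go to `1` with probability `1`. -/
def transP (lam mu : ℝ) (i j : ℕ) : ℝ :=
  if i = 0 then (if j = 1 then 1 else 0)
  else if j = i + 1 then lam / (lam + mu)
  else if j < i then mu / (i * (lam + mu))
  else 0

/-- `η` is (distributed as) the discrete-time Markov chain on `ℕ` started at `x` with
transition probabilities `transP lam mu`, under the probability measure `P`:
the finite-dimensional distributions are products of transition probabilities. -/
def IsMarkovChainFrom {Ω : Type*} [MeasurableSpace Ω] (P : Measure Ω)
    (lam mu : ℝ) (x : ℕ) (η : ℕ → Ω → ℕ) : Prop :=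
  (∀ k, Measurable (η k)) ∧
  ∀ (n : ℕ) (path : ℕ → ℕ),
    P {ω | ∀ l ≤ n, η l ω = path l} =
      (if path 0 = x then 1 else 0) *
        ∏ l ∈ Finset.range n, ENNReal.ofReal (transP lam mu (path l) (path (l + 1)))

/-- `ν` is a Poisson process of rate `α` under `P`: it starts at `0`, has monotone paths
on `[0,∞)`, independent increments, and each increment over `[s,t]` is Poisson
distributed with mean `α(t-s)`. -/
def IsPoissonProcess {Ω : Type*} [MeasurableSpace Ω] (P : Measure Ω)
    (α : ℝ) (ν : ℝ → Ω → ℕ) : Prop :=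
  (∀ t, Measurable (ν t)) ∧
  (∀ ω, ν 0 ω = 0) ∧
  (∀ ω, MonotoneOn (fun t => ν t ω) (Set.Ici (0 : ℝ))) ∧
  (∀ (n : ℕ) (t : ℕ → ℝ), 0 ≤ t 0 → Monotone t →
    iIndepFun
      (fun i : Fin n => fun ω => ν (t (i + 1)) ω - ν (t i) ω) P) ∧
  (∀ s t : ℝ, 0 ≤ s → s ≤ t → ∀ k : ℕ,
    P {ω | ν t ω - ν s ω = k} =
      ENNReal.ofReal (Real.exp (-(α * (t - s))) * (α * (t - s)) ^ k / (Nat.factorial k)))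

/-- The processes `η` and `ν` are independent (as processes). -/
def IndepProc {Ω : Type*} [MeasurableSpace Ω] (P : Measure Ω)
    (η : ℕ → Ω → ℕ) (ν : ℝ → Ω → ℕ) : Prop :=
  IndepFun (fun ω => fun k => η k ω) (fun ω => fun t => ν t ω) P

/-- `ξ` is (distributed as) the Poisson process with uniform catastrophes started from
`x`: `ξ(t) = η(ν(t))` where `η` is the embedded Markov chain started at `x` (from `i ≥ 1`
it jumps to `i+1` with probability `λ/(λ+μ)` and uniformly down with probability
`μ/(λ+μ)`, and from `0` it jumps to `1`), and `ν` is an independent Poisson process of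
rate `α`. -/
def IsCatastropheProcessFrom {Ω : Type*} [MeasurableSpace Ω] (P : Measure Ω)
    (lam mu α : ℝ) (x : ℕ) (ξ : ℝ → Ω → ℕ) : Prop :=
  ∃ (η : ℕ → Ω → ℕ) (ν : ℝ → Ω → ℕ),
    IsMarkovChainFrom P lam mu x η ∧ IsPoissonProcess P α ν ∧
    IndepProc P η ν ∧ ∀ t ω, ξ t ω = η (ν t ω) ω

lemma Monotone.add_sum_range_tsub {M : Type*} [AddCommMonoid M] [PartialOrder M]
    [CanonicallyOrderedAdd M] [Sub M] [OrderedSub M] {g : ℕ → M} (hg : Monotone g) (n : ℕ) :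
    g 0 + ∑ c ∈ Finset.range n, (g (c + 1) - g c) = g n := by
  induction n with
  | zero => simp
  | succ n ih => rw [Finset.sum_range_succ, ← add_assoc, ih, add_tsub_cancel_of_le (hg n.le_succ)]

def tailSum (π : ℕ → ℝ≥0∞) (a : ℕ) : ℝ≥0∞ := ∑' j, (Ici a).indicator π j

lemma tailSum_zero (π : ℕ → ℝ≥0∞) : tailSum π 0 = ∑' j, π j := by
  simp [tailSum]

lemma antitone_tailSum (π : ℕ → ℝ≥0∞) : Antitone (tailSum π) := fun _ _ hab =>
  ENNReal.tsum_le_tsum fun _ =>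
    indicator_le_indicator_of_subset (Ici_subset_Ici.2 hab) (fun _ => zero_le) _

lemma tsum_mul_eq_add_tsum_tailSum {π g : ℕ → ℝ≥0∞} (hg : Monotone g) :
    ∑' j, π j * g j = g 0 * tailSum π 0 + ∑' c, (g (c + 1) - g c) * tailSum π (c + 1) := by
  have hinner : ∀ j, ∑' c, (g (c + 1) - g c) * (Ici (c + 1)).indicator π j
      = π j * ∑ c ∈ Finset.range j, (g (c + 1) - g c) := by
    intro j
    rw [Finset.mul_sum, sum_eq_tsum_indicator]
    congr 1 with c
    by_cases hc : c < j <;> simp [hc, mul_comm]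
  simp_rw [tailSum, ← ENNReal.tsum_mul_left]
  rw [ENNReal.tsum_comm, tsum_congr hinner, ← ENNReal.tsum_add]
  congr 1 with j
  rw [indicator_of_mem (mem_Ici.2 j.zero_le), ← hg.add_sum_range_tsub j, mul_add, mul_comm]

lemma tsum_mul_le_tsum_mul_succ_of_tailSum_le {π π' g : ℕ → ℝ≥0∞} (hg : Monotone g)
    (h : ∀ a, tailSum π a ≤ tailSum π' (a - 1)) :
    ∑' j, π j * g j ≤ ∑' i, π' i * g (i + 1) := by
  rw [tsum_mul_eq_add_tsum_tailSum hg,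
    tsum_mul_eq_add_tsum_tailSum (g := fun i => g (i + 1)) fun _ _ h => hg (by omega),
    tsum_eq_zero_add' ENNReal.summable]
  calc g 0 * tailSum π 0 + ((g (0 + 1) - g 0) * tailSum π (0 + 1)
          + ∑' c, (g (c + 1 + 1) - g (c + 1)) * tailSum π (c + 1 + 1))
      ≤ g 0 * tailSum π' 0 + ((g 1 - g 0) * tailSum π' 0
          + ∑' c, (g (c + 1 + 1) - g (c + 1)) * tailSum π' (c + 1)) := by
        gcongr with c
        exacts [h 0, h 1, h (c + 2)]
    _ = _ := by
        rw [← add_assoc, ← add_mul, add_tsub_cancel_of_le (hg zero_le_one)]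
        rfl

namespace CatastropheChain

variable (lam mu : ℝ)

def kernel (i j : ℕ) : ℝ≥0∞ := ENNReal.ofReal (transP lam mu i j)

def law (x : ℕ) : ℕ → ℕ → ℝ≥0∞
  | 0, m => if m = x then 1 else 0
  | n + 1, m => ∑' i, law x n i * kernel lam mu i m

lemma tailSum_kernel_zero (a : ℕ) : tailSum (kernel lam mu 0) a = if a ≤ 1 then 1 else 0 := by
  rw [tailSum, tsum_eq_single 1 fun j hj => by simp [kernel, transP, hj]]
  split_ifs with ha <;> simp [kernel, transP, ha]

variable {lam mu}

lemma sum_range_indicator_transP {i : ℕ} (hi : i ≠ 0) (a : ℕ) :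
    ∑ j ∈ Finset.range (i + 2), (Ici a).indicator (transP lam mu i) j =
      (if a ≤ i + 1 then lam else 0) / (lam + mu) + mu / (lam + mu) * ((i - a : ℕ) / i) := by
  have hlow : ∑ j ∈ Finset.range i, (Ici a).indicator (transP lam mu i) j
      = (i - a : ℕ) * (mu / (i * (lam + mu))) := by
    have hterm : ∀ j ∈ Finset.range i, (Ici a).indicator (transP lam mu i) j =
        (Finset.Ico a i : Set ℕ).indicator (fun _ => mu / (i * (lam + mu))) j := by
      intro j hj
      have hj : j < i := Finset.mem_range.1 hj
      have hj' : j ≠ i + 1 := by omega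
      by_cases haj : a ≤ j <;> simp [transP, hi, haj, hj, hj']
    rw [Finset.sum_congr rfl hterm, Finset.sum_indicator_subset _
      fun j hj => Finset.mem_range.2 (Finset.mem_Ico.1 hj).2,
      Finset.sum_const, Nat.card_Ico, nsmul_eq_mul]
  have hdiag : transP lam mu i i = 0 := by simp [transP, hi]
  have hup : transP lam mu i (i + 1) = lam / (lam + mu) := by simp [transP, hi]
  rw [Finset.sum_range_succ, Finset.sum_range_succ, hlow]
  simp only [indicator_apply, mem_Ici, hdiag, hup, ite_self, add_zero]
  rw [mul_comm (i : ℝ), ← div_div]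
  split_ifs <;> ring

lemma transP_nonneg (hlam : 0 ≤ lam) (hmu : 0 ≤ mu) (i j : ℕ) : 0 ≤ transP lam mu i j := by
  unfold transP
  split_ifs <;> positivity

-- The up-jump to `i + 1` counts iff `a ≤ i + 1`; of the `i` equally likely down-jumps,
-- `i - a` land in `[a, i)`.
lemma tailSum_kernel_of_ne_zero (hlam : 0 ≤ lam) (hmu : 0 ≤ mu) {i : ℕ} (hi : i ≠ 0) (a : ℕ) :
    tailSum (kernel lam mu i) a = ENNReal.ofReal
      ((if a ≤ i + 1 then lam else 0) / (lam + mu) + mu / (lam + mu) * ((i - a : ℕ) / i)) := by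
  have hvanish : ∀ j ∉ Finset.range (i + 2), (Ici a).indicator (kernel lam mu i) j = 0 := by
    intro j hj
    have hj : i + 2 ≤ j := by simpa using hj
    have hj₁ : j ≠ i + 1 := by omega
    have hj₂ : ¬j < i := by omega
    simp [kernel, transP, hi, hj₁, hj₂]
  rw [← sum_range_indicator_transP hi, ENNReal.ofReal_sum_of_nonneg
      fun j _ => indicator_nonneg (fun j _ => transP_nonneg hlam hmu i j) j,
    tailSum, tsum_eq_sum hvanish]
  exact Finset.sum_congr rfl fun j _ =>
    congrFun (indicator_comp_of_zero (f := transP lam mu i) ENNReal.ofReal_zero) j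

lemma tsum_kernel (hlam : 0 < lam) (hmu : 0 < mu) (i : ℕ) : ∑' j, kernel lam mu i j = 1 := by
  rw [← tailSum_zero]
  rcases eq_or_ne i 0 with rfl | hi
  · simp [tailSum_kernel_zero]
  · have hi' : (i : ℝ) ≠ 0 := by exact_mod_cast hi
    rw [tailSum_kernel_of_ne_zero hlam.le hmu.le hi, if_pos (Nat.zero_le _), Nat.sub_zero,
      div_self hi', mul_one, ← add_div, div_self (by positivity), ENNReal.ofReal_one]

lemma monotone_tailSum_kernel (hlam : 0 ≤ lam) (hmu : 0 ≤ mu) {a : ℕ} (ha : 2 ≤ a) :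
    Monotone fun i => tailSum (kernel lam mu i) a := by
  refine monotone_nat_of_le_succ fun i => ?_
  rcases eq_or_ne i 0 with rfl | hi
  · rw [tailSum_kernel_zero, if_neg (by omega)]
    exact zero_le
  have hi' : (0 : ℝ) < i := by positivity
  have hfrac : ((i - a : ℕ) : ℝ) / i ≤ ((i + 1 - a : ℕ) : ℝ) / (i + 1 : ℕ) := by
    rcases le_or_gt a i with hai | hia
    · rw [div_le_div_iff₀ hi' (by positivity), Nat.cast_sub hai, Nat.cast_sub (by omega)]
      push_cast
      nlinarith
    · simp [Nat.sub_eq_zero_of_le hia.le]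
      positivity
  rw [tailSum_kernel_of_ne_zero hlam hmu hi,
    tailSum_kernel_of_ne_zero hlam hmu (Nat.add_one_ne_zero i)]
  gcongr ENNReal.ofReal (?_ / _ + _ * ?_)
  split_ifs <;> first | omega | linarith

lemma tailSum_kernel_succ_succ_le (hlam : 0 ≤ lam) (hmu : 0 ≤ mu) (i a : ℕ) :
    tailSum (kernel lam mu (i + 1)) (a + 1) ≤ tailSum (kernel lam mu i) a := by
  rw [tailSum_kernel_of_ne_zero hlam hmu (Nat.add_one_ne_zero i)]
  rcases eq_or_ne i 0 with rfl | hi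
  · rw [tailSum_kernel_zero]
    split_ifs with h₁ h₂ h₂ <;> try omega
    · simpa using div_le_one_of_le₀ (by linarith) (by linarith)
    · simp
  · rw [tailSum_kernel_of_ne_zero hlam hmu hi, Nat.add_sub_add_right]
    gcongr ENNReal.ofReal (?_ + _ * ?_)
    · split_ifs <;> first | omega | rfl
    · push_cast
      gcongr
      linarith

lemma tsum_law (hlam : 0 < lam) (hmu : 0 < mu) (x n : ℕ) : ∑' m, law lam mu x n m = 1 := by
  induction n with
  | zero => simp [law]
  | succ n ih =>
    simp_rw [law, ENNReal.tsum_comm (f := fun m i => law lam mu x n i * kernel lam mu i m),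
      ENNReal.tsum_mul_left, tsum_kernel hlam hmu, mul_one, ih]

lemma tailSum_law_zero (x c : ℕ) : tailSum (law lam mu x 0) c = if c ≤ x then 1 else 0 := by
  rw [tailSum, tsum_eq_single x fun m hm => by simp [law, hm]]
  split_ifs with h <;> simp [law, h]

lemma tailSum_law_succ (x n c : ℕ) :
    tailSum (law lam mu x (n + 1)) c = ∑' i, law lam mu x n i * tailSum (kernel lam mu i) c := by
  simp_rw [tailSum, law, ← ENNReal.tsum_mul_left]
  rw [ENNReal.tsum_comm]
  refine tsum_congr fun m => ?_
  by_cases hm : m ∈ Ici c <;> simp [hm]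

lemma tailSum_law_succ_le (hlam : 0 < lam) (hmu : 0 < mu) (x n c : ℕ) :
    tailSum (law lam mu (x + 1) n) c ≤ tailSum (law lam mu x n) (c - 1) := by
  induction n generalizing c with
  | zero =>
    rw [tailSum_law_zero, tailSum_law_zero]
    split_ifs <;> first | omega | simp
  | succ n ih =>
    rcases le_or_gt c 1 with hc | hc
    · rw [Nat.sub_eq_zero_of_le hc, tailSum_zero, tsum_law hlam hmu]
      exact (antitone_tailSum _ (Nat.zero_le c)).trans_eq
        ((tailSum_zero _).trans (tsum_law hlam hmu _ _))
    · rw [tailSum_law_succ, tailSum_law_succ]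
      calc ∑' j, law lam mu (x + 1) n j * tailSum (kernel lam mu j) c
          ≤ ∑' i, law lam mu x n i * tailSum (kernel lam mu (i + 1)) c :=
            tsum_mul_le_tsum_mul_succ_of_tailSum_le
              (monotone_tailSum_kernel hlam.le hmu.le hc) ih
        _ ≤ ∑' i, law lam mu x n i * tailSum (kernel lam mu i) (c - 1) := by
            gcongr with i
            simpa [Nat.sub_add_cancel hc.le] using
              tailSum_kernel_succ_succ_le hlam.le hmu.le i (c - 1)

lemma tailSum_law_add_le (hlam : 0 < lam) (hmu : 0 < mu) (x d n c : ℕ) :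
    tailSum (law lam mu (x + d) n) c ≤ tailSum (law lam mu x n) (c - d) := by
  induction d generalizing c with
  | zero => rfl
  | succ d ih =>
    calc tailSum (law lam mu (x + d + 1) n) c ≤ tailSum (law lam mu (x + d) n) (c - 1) :=
          tailSum_law_succ_le hlam hmu (x + d) n c
      _ ≤ tailSum (law lam mu x n) (c - (d + 1)) := by
          simpa [Nat.sub_sub, add_comm] using ih (c - 1)

end CatastropheChain

section MarkovChain

open CatastropheChain

variable {Ω : Type*} [MeasurableSpace Ω] {P : Measure Ω} {lam mu : ℝ} {x : ℕ} {η : ℕ → Ω → ℕ}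

lemma measurableSet_setOf_segment_eq (hη : ∀ k, Measurable (η k)) (path : ℕ → ℕ) (k n : ℕ) :
    MeasurableSet {ω | ∀ l, k ≤ l → l ≤ n → η l ω = path l} := by
  simp only [ofPred_forall]
  exact .iInter fun l => .iInter fun _ => .iInter fun _ => hη l (measurableSet_singleton _)

lemma IsMarkovChainFrom.measure_segment (hη : IsMarkovChainFrom P lam mu x η) {k n : ℕ}
    (hkn : k ≤ n) (path : ℕ → ℕ) :
    P {ω | ∀ l, k ≤ l → l ≤ n → η l ω = path l} =
      law lam mu x k (path k) * ∏ l ∈ Finset.Ico k n, kernel lam mu (path l) (path (l + 1)) := by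
  induction k generalizing path with
  | zero =>
    simp only [Nat.zero_le, true_imp_iff]
    rw [hη.2 n path, Finset.range_eq_Ico]
    rfl
  | succ k ih =>
    have hunion : {ω | ∀ l, k + 1 ≤ l → l ≤ n → η l ω = path l} =
        ⋃ i, {ω | ∀ l, k ≤ l → l ≤ n → η l ω = Function.update path k i l} := by
      ext ω
      simp only [mem_ofPred_eq, mem_iUnion]
      refine ⟨fun h => ⟨η k ω, fun l hkl hln => ?_⟩, fun ⟨i, h⟩ l hkl hln => ?_⟩
      · rcases eq_or_ne l k with rfl | hlk
        · simp
        · rw [Function.update_of_ne hlk]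
          exact h l (by omega) hln
      · simpa [Function.update_of_ne (by omega : l ≠ k)] using h l (by omega) hln
    have hdisj : Pairwise (Function.onFun Disjoint fun i =>
        {ω | ∀ l, k ≤ l → l ≤ n → η l ω = Function.update path k i l}) := by
      refine fun i j hij => Set.disjoint_left.2 fun ω hi hj => hij ?_
      simpa using (hi k le_rfl (by omega)).symm.trans (hj k le_rfl (by omega))
    have htail : ∀ i, ∏ l ∈ Finset.Ico (k + 1) n,
        kernel lam mu (Function.update path k i l) (Function.update path k i (l + 1)) =
          ∏ l ∈ Finset.Ico (k + 1) n, kernel lam mu (path l) (path (l + 1)) := by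
      refine fun i => Finset.prod_congr rfl fun l hl => ?_
      have hl := (Finset.mem_Ico.1 hl).1
      rw [Function.update_of_ne (by omega), Function.update_of_ne (by omega)]
    rw [hunion, measure_iUnion hdisj fun i => measurableSet_setOf_segment_eq hη.1 _ k n]
    simp_rw [ih (by omega), Finset.prod_eq_prod_Ico_succ_bot (by omega : k < n), htail,
      Function.update_self, Function.update_of_ne (by omega : k + 1 ≠ k), ← mul_assoc,
      ENNReal.tsum_mul_right]
    rfl

lemma IsMarkovChainFrom.measure_eq (hη : IsMarkovChainFrom P lam mu x η) (n m : ℕ) :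
    P {ω | η n ω = m} = law lam mu x n m := by
  have hset : {ω | η n ω = m} = {ω | ∀ l, n ≤ l → l ≤ n → η l ω = m} := by
    ext ω
    exact ⟨fun h l h₁ h₂ => le_antisymm h₂ h₁ ▸ h, fun h => h n le_rfl le_rfl⟩
  simpa [hset] using hη.measure_segment le_rfl fun _ => m

lemma IsMarkovChainFrom.measure_le (hη : IsMarkovChainFrom P lam mu x η) (n c : ℕ) :
    P {ω | c ≤ η n ω} = tailSum (law lam mu x n) c := by
  change P (η n ⁻¹' Ici c) = _
  rw [tailSum, ← tsum_subtype, ← tsum_measure_preimage_singleton (to_countable _)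
    fun m _ => hη.1 n (measurableSet_singleton m)]
  exact tsum_congr fun m => hη.measure_eq n m

end MarkovChain

section Processes

open CatastropheChain

variable {Ω : Type*} [MeasurableSpace Ω] {P : Measure Ω}

lemma IsPoissonProcess.measure_eq {α : ℝ} {ν : ℝ → Ω → ℕ} (hν : IsPoissonProcess P α ν)
    {t : ℝ} (ht : 0 ≤ t) (n : ℕ) :
    P {ω | ν t ω = n} = ENNReal.ofReal (Real.exp (-(α * t)) * (α * t) ^ n / n.factorial) := by
  simpa [hν.2.1] using hν.2.2.2.2 0 t le_rfl ht n

lemma IsCatastropheProcessFrom.measure_le {lam mu α : ℝ} {x : ℕ} {ξ : ℝ → Ω → ℕ}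
    (hξ : IsCatastropheProcessFrom P lam mu α x ξ) {t : ℝ} (ht : 0 ≤ t) (c : ℕ) :
    P {ω | c ≤ ξ t ω} = ∑' n, ENNReal.ofReal (Real.exp (-(α * t)) * (α * t) ^ n / n.factorial) *
      tailSum (law lam mu x n) c := by
  obtain ⟨η, ν, hη, hν, hind, hξ⟩ := hξ
  have hunion : {ω | c ≤ ξ t ω} = ⋃ n, {ω | c ≤ η n ω} ∩ {ω | ν t ω = n} := by
    ext ω
    simp [hξ]
  have hdisj : Pairwise (Function.onFun Disjoint fun n => {ω | c ≤ η n ω} ∩ {ω | ν t ω = n}) :=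
    (pairwise_disjoint_fiber (ν t)).mono fun _ _ h => h.mono inter_subset_right inter_subset_right
  rw [hunion, measure_iUnion hdisj fun n =>
    (hη.1 n measurableSet_Ici).inter (hν.1 t (measurableSet_singleton n))]
  refine tsum_congr fun n => ?_
  rw [← hν.measure_eq ht n, ← hη.measure_le n c, mul_comm]
  exact hind.measure_inter_preimage_eq_mul {f : ℕ → ℕ | c ≤ f n} {g : ℝ → ℕ | g t = n}
    (measurable_pi_apply n measurableSet_Ici)
    (measurable_pi_apply (X := fun _ : ℝ => ℕ) t (measurableSet_singleton n))

end Processes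

lemma setOf_lt_natCast_eq {Ω : Type*} (w : ℝ) (f : Ω → ℕ) :
    {ω | w < (f ω : ℝ)} = {ω | (⌊w⌋ + 1).toNat ≤ f ω} := by
  ext ω
  have h : ⌊w⌋ < (f ω : ℤ) ↔ w < (f ω : ℝ) := by exact_mod_cast Int.floor_lt
  simp only [mem_ofPred_eq, ← h]
  omega

theorem tail_comparison_poisson_uniform_catastrophes_general
    {Ω₁ Ω₂ : Type*} [MeasurableSpace Ω₁] [MeasurableSpace Ω₂]
    (P₁ : Measure Ω₁) (P₂ : Measure Ω₂)
    (lam mu alpha : ℝ) (hlam : 0 < lam) (hmu : 0 < mu)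
    (x y : ℕ) (hxy : x < y)
    (ξx : ℝ → Ω₁ → ℕ) (ξy : ℝ → Ω₂ → ℕ)
    (hx : IsCatastropheProcessFrom P₁ lam mu alpha x ξx)
    (hy : IsCatastropheProcessFrom P₂ lam mu alpha y ξy)
    (z : ℝ) (t : ℝ) (ht : 0 ≤ t) :
    P₂ {ω | z < (ξy t ω : ℝ)} ≤
      P₁ {ω | z - |(x : ℝ) - (y : ℝ)| < (ξx t ω : ℝ)} := by
  obtain ⟨d, rfl⟩ : ∃ d, y = x + d := ⟨y - x, by omega⟩
  have habs : |(x : ℝ) - ((x + d : ℕ) : ℝ)| = d := by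
    push_cast
    rw [sub_add_cancel_left, abs_neg, Nat.abs_cast]
  have hfloor : (⌊z - d⌋ + 1).toNat = (⌊z⌋ + 1).toNat - d := by
    rw [Int.floor_sub_natCast]
    omega
  rw [habs, setOf_lt_natCast_eq, setOf_lt_natCast_eq, hfloor, hy.measure_le ht, hx.measure_le ht]
  exact ENNReal.tsum_le_tsum fun n => by
    gcongr
    exact CatastropheChain.tailSum_law_add_le hlam hmu x d n _

/-- **Monotone comparison of tails.** For integers `0 ≤ x < y`, any real `z`, and any
`t ≥ 0`, `P(ξ_y(t) > z) ≤ P(ξ_x(t) > z - |x - y|)` for any versions `ξ_x`, `ξ_y` of the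
Poisson process with uniform catastrophes started from `x` and from `y`. -/
theorem tail_comparison_poisson_uniform_catastrophes
    {Ω₁ Ω₂ : Type*} [MeasurableSpace Ω₁] [MeasurableSpace Ω₂]
    (P₁ : Measure Ω₁) (P₂ : Measure Ω₂)
    [IsProbabilityMeasure P₁] [IsProbabilityMeasure P₂]
    (lam mu alpha : ℝ) (hlam : 0 < lam) (hmu : 0 < mu) (halpha : 0 < alpha)
    (x y : ℕ) (hxy : x < y)
    (ξx : ℝ → Ω₁ → ℕ) (ξy : ℝ → Ω₂ → ℕ)
    (hx : IsCatastropheProcessFrom P₁ lam mu alpha x ξx)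
    (hy : IsCatastropheProcessFrom P₂ lam mu alpha y ξy)
    (z : ℝ) (t : ℝ) (ht : 0 ≤ t) :
    P₂ {ω | z < (ξy t ω : ℝ)} ≤
      P₁ {ω | z - |(x : ℝ) - (y : ℝ)| < (ξx t ω : ℝ)} :=
  tail_comparison_poisson_uniform_catastrophes_general P₁ P₂ lam mu alpha hlam hmu x y hxy ξx ξy hx
    hy z t ht
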